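/- Let S = C̄_φ be as in the classification of symmetric composition superalgebras in characteristic 2, with product x*y = φ(x̄)·φ²(ȳ), where φ ≠ 1 is an order-3 automorphism of the Cayley superalgebra (C,·) fixing the even part pointwise and with no nonzero fixed odd vectors. Then a decomposition S = ⊕_{g∈G} Sᵍ compatible with the main ℤ₂-grading is a group grading of (S,*) if and only if it is a group grading of (S,·) all of whose homogeneous components Sᵍ are φ-invariant. -/

import Mathlib

open QuadraticMap

/-- The sign `(−1)^i` for a parity `i ∈ ℤ₂`, as an element of `F`. -/
def sgn2 (F : Type*) [Field F] : ZMod 2 → F := fun i => if i = 0 then 1 else -1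

/-- `x` is homogeneous of parity `i` with respect to the decomposition `even ⊕ odd`. -/
def IsPar {F S : Type*} [Field F] [AddCommGroup S] [Module F S]
    (even odd : Submodule F S) (x : S) (i : ZMod 2) : Prop :=
  (i = 0 ∧ x ∈ even) ∨ (i = 1 ∧ x ∈ odd)

/-- A composition superalgebra structure on the vector space `S` with (not necessarily
associative, not necessarily unital) bilinear multiplication `mul`: a `ℤ₂`-graded algebra
`S = even ⊕ odd` with a regular quadratic superform `q = (q0, b)` satisfying the composition
superalgebra axioms. -/
structure SuperComp (F S : Type*) [Field F] [AddCommGroup S] [Module F S]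
    (mul : S →ₗ[F] S →ₗ[F] S) where
  even : Submodule F S
  odd : Submodule F S
  compl : IsCompl even odd
  mul_ee : ∀ x ∈ even, ∀ y ∈ even, mul x y ∈ even
  mul_eo : ∀ x ∈ even, ∀ y ∈ odd, mul x y ∈ odd
  mul_oe : ∀ x ∈ odd, ∀ y ∈ even, mul x y ∈ odd
  mul_oo : ∀ x ∈ odd, ∀ y ∈ odd, mul x y ∈ even
  /-- the quadratic form `q0` on the even part -/
  q0 : QuadraticForm F even
  /-- the even supersymmetric bilinear form `b` -/
  b : S →ₗ[F] S →ₗ[F] F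
  /-- on the even part, `b` is the polar form of `q0` -/
  b_polar : ∀ x y : even, b x y = polar q0 x y
  /-- `b` is alternating on the odd part -/
  b_alt_odd : ∀ x ∈ odd, b x x = 0
  b_alt_skew : ∀ x ∈ odd, ∀ y ∈ odd, b x y = - b y x
  /-- `b` is even: even and odd parts are orthogonal -/
  b_eo : ∀ x ∈ even, ∀ y ∈ odd, b x y = 0 ∧ b y x = 0
  /-- regularity of `q0` (KMRT-style) -/
  q0_reg : ∀ x : even, (∀ y : even, polar q0 x y = 0) → q0 x = 0 → (x : S) = 0
  /-- nondegeneracy of `b` on the odd part -/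
  b_odd_nondeg : ∀ x ∈ odd, (∀ y ∈ odd, b x y = 0) → x = 0
  /-- composition axiom i): `q0` is multiplicative on the even part -/
  comp_i : ∀ x y : even, q0 ⟨mul x y, mul_ee x x.2 y y.2⟩ = q0 x * q0 y
  /-- composition axiom ii) -/
  comp_ii₁ : ∀ (x : even) (y z : S), b (mul x y) (mul x z) = q0 x * b y z
  comp_ii₂ : ∀ (x : even) (y z : S), b (mul y x) (mul z x) = q0 x * b y z
  /-- composition axiom iii), for homogeneous elements -/
  comp_iii : ∀ (px py pz pt : ZMod 2) (x y z t : S),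
    IsPar even odd x px → IsPar even odd y py → IsPar even odd z pz → IsPar even odd t pt →
    b (mul x y) (mul z t) + sgn2 F (px * py + px * pz + py * pz) * b (mul z y) (mul x t)
      = sgn2 F (py * pz) * (b x z * b y t)

/-- A Hurwitz superalgebra structure: a unital composition superalgebra. -/
structure HurwitzSuperOn (F S : Type*) [Field F] [AddCommGroup S] [Module F S]
    (mul : S →ₗ[F] S →ₗ[F] S) extends SuperComp F S mul where
  one : S
  one_even : one ∈ even
  one_mul : ∀ x : S, mul one x = x
  mul_one : ∀ x : S, mul x one = x

/-!
Write `1 = ∑ u_g` for the decomposition of the unit of `C` and `t(x) = b(x, 1)` for the trace.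

If `γ` grades `(C, ·)`, the unit is homogeneous of degree `1`, and projecting
`x² = t(x) x - q(x) 1` to the degree `k ≠ k²` of an even `x ∈ γ k` shows that `t` vanishes off
degree `1`. Hence `x ↦ x̄` preserves every component, and so does `x * y = φ(x̄) φ²(ȳ)`.

Conversely, let `γ` grade `(S, *)`. As `φ` fixes `C₀`, the products `x * 1` and `x * x` of an even
`x` are `x̄` and `x̄²`; projecting `x * 1 = x̄` to degree `hg` gives
`x * u_g = t(x) u_{hg} - δ_{g,1} x` for even `x ∈ γ h`. For `x = u_1` this and the quadratic
identity put `u_1` in `F 1`. If `u_1 = 0`, every even homogeneous `x ∈ γ h` is a multiple of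
`u_h`, and the same two identities for `x = u_h ≠ 0` kill all `u_m` with `m ∉ {h, h²}`, so that
`dim C₀ ≤ 2`. So `1 ∈ γ 1`, and `ψ = (· * 1) = φ ∘ ¯` preserves the components. In
characteristic `2` the involution `¯` commutes with `φ`, so `ψ² = φ²`, `φ = ψ⁴`, `¯ = ψ³`, and
finally `x · y = φ²(x̄) * φ(ȳ)`.
-/

theorem CharTwo.neg_eq_of_module {F M : Type*} [Field F] [CharP F 2] [AddCommGroup M]
    [Module F M] (w : M) : -w = w := by
  rw [← neg_one_smul F w, CharTwo.neg_eq, one_smul]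

def IsGrading {R M ι : Type*} [CommSemiring R] [AddCommMonoid M] [Module R M] [Mul ι]
    (μ : M →ₗ[R] M →ₗ[R] M) (ℳ : ι → Submodule R M) : Prop :=
  ∀ i j, ∀ x ∈ ℳ i, ∀ y ∈ ℳ j, μ x y ∈ ℳ (i * j)

section Decomposition

open DirectSum

variable {ι M : Type*} [DecidableEq ι]

theorem DirectSum.decompose_map_apply_of_mapsTo {σ E : Type*} [AddCommMonoid M] [SetLike σ M]
    [AddSubmonoidClass σ M] (ℳ : ι → σ) [Decomposition ℳ] [FunLike E M M]
    [AddMonoidHomClass E M M] (f : E) {e : ι → ι} (he : Function.Injective e)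
    (hf : ∀ i, ∀ x ∈ ℳ i, f x ∈ ℳ (e i)) (x : M) (i : ι) :
    (decompose ℳ (f x) (e i) : M) = f (decompose ℳ x i) := by
  induction x using Decomposition.inductionOn ℳ with
  | zero => simp
  | @homogeneous j x =>
    by_cases hji : j = i
    · subst hji
      rw [decompose_of_mem_same ℳ (hf j x x.2), decompose_coe, of_eq_same]
    · rw [decompose_of_mem_ne ℳ (hf j x x.2) (he.ne hji), decompose_of_mem_ne ℳ x.2 hji,
        map_zero]
  | add x y hx hy => simp only [map_add, decompose_add, add_apply, AddMemClass.coe_add, hx, hy]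

theorem SetLike.isHomogeneous_of_le_sup_inf {R : Type*} [Ring R] [AddCommGroup M] [Module R M]
    {ℳ : ι → Submodule R M} [Decomposition ℳ] {A B : Submodule R M} (hAB : IsCompl A B)
    (h : ∀ i, ℳ i ≤ ℳ i ⊓ A ⊔ ℳ i ⊓ B) : SetLike.IsHomogeneous ℳ A := by
  have hp : ∀ i, ∀ x ∈ ℳ i, A.projection B hAB x ∈ ℳ i := by
    intro i x hx
    obtain ⟨a, ha, c, hc, rfl⟩ := Submodule.mem_sup.mp (h i hx)
    rw [map_add, Submodule.projection_apply_of_mem_left hAB ha.2,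
      Submodule.projection_apply_of_mem_right hAB hc.2, add_zero]
    exact ha.1
  intro i x hx
  rw [← Submodule.projection_apply_of_mem_left hAB hx, show i = id i from rfl,
    decompose_map_apply_of_mapsTo ℳ _ Function.injective_id hp]
  exact Submodule.projection_apply_mem hAB _

variable {R : Type*} [CommSemiring R] [AddCommMonoid M] [Module R M] {ℳ : ι → Submodule R M}
  [Decomposition ℳ] [LeftCancelMonoid ι] {μ : M →ₗ[R] M →ₗ[R] M}

theorem IsGrading.decompose_apply_left (hμ : IsGrading μ ℳ) {i : ι} {x : M} (hx : x ∈ ℳ i)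
    (y : M) (j : ι) : (decompose ℳ (μ x y) (i * j) : M) = μ x (decompose ℳ y j) :=
  decompose_map_apply_of_mapsTo ℳ (μ x) (mul_right_injective i)
    (fun j y hy => hμ i j x hx y hy) y j

theorem IsGrading.mem_one_of_mul_eq (hμ : IsGrading μ ℳ) {e : M} (he₁ : ∀ x, μ e x = x)
    (he₂ : ∀ x, μ x e = x) : e ∈ ℳ 1 := by
  have key : ∀ x, μ x (decompose ℳ e 1) = x := by
    intro x
    induction x using Decomposition.inductionOn ℳ with
    | zero => simp
    | @homogeneous i x =>
      rw [← hμ.decompose_apply_left x.2, mul_one, he₂, decompose_coe, of_eq_same]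
    | add x y hx hy => rw [map_add, LinearMap.add_apply, hx, hy]
  rw [← key e, he₁]
  exact (decompose ℳ e 1).2

end Decomposition

namespace HurwitzSuperOn

variable {F S : Type*} [Field F] [AddCommGroup S] [Module F S] {mul : S →ₗ[F] S →ₗ[F] S}
  (H : HurwitzSuperOn F S mul)

def trace : S →ₗ[F] F := H.b.flip H.one

/-- `x ↦ x̄`, the canonical involution. -/
def conj : S →ₗ[F] S := H.trace.smulRight H.one - LinearMap.id

/-- The product `x * y = φ(x̄) · φ²(ȳ)` of the Okubo superalgebra `S = C̄_φ`. -/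
def okuboMul (φ : S →ₗ[F] S) : S →ₗ[F] S →ₗ[F] S :=
  (mul ∘ₗ φ ∘ₗ H.conj).compl₂ (φ ∘ₗ φ ∘ₗ H.conj)

theorem okuboMul_apply (φ : S →ₗ[F] S) (x y : S) :
    H.okuboMul φ x y = mul (φ (H.conj x)) (φ (φ (H.conj y))) := rfl

theorem trace_apply (x : S) : H.trace x = H.b x H.one := rfl

theorem conj_apply (x : S) : H.conj x = H.trace x • H.one - x := rfl

theorem trace_eq_zero_of_mem_odd {x : S} (hx : x ∈ H.odd) : H.trace x = 0 :=
  (H.b_eo H.one H.one_even x hx).2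

theorem b_comm_of_mem_even {x y : S} (hx : x ∈ H.even) (hy : y ∈ H.even) :
    H.b x y = H.b y x := by
  rw [H.b_polar ⟨x, hx⟩ ⟨y, hy⟩, H.b_polar ⟨y, hy⟩ ⟨x, hx⟩, polar_comm]

theorem conj_mem_even {x : S} (hx : x ∈ H.even) : H.conj x ∈ H.even :=
  H.even.sub_mem (H.even.smul_mem _ H.one_even) hx

theorem odd_ne_bot (h8 : Module.finrank F S = 8) (h4 : Module.finrank F H.even = 4) :
    H.odd ≠ ⊥ := by
  intro hodd
  have htop : H.even = ⊤ := eq_top_of_isCompl_bot (hodd ▸ H.compl)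
  rw [htop, finrank_top, h8] at h4
  omega

theorem exists_b_ne_zero (hodd : H.odd ≠ ⊥) : ∃ y ∈ H.odd, ∃ z ∈ H.odd, H.b y z ≠ 0 := by
  obtain ⟨y, hy, hy0⟩ := Submodule.exists_mem_ne_zero_of_ne_bot hodd
  by_contra! h
  exact hy0 (H.b_odd_nondeg y hy (h y hy))

section Automorphism

variable {φ : S →ₗ[F] S} (hφeven : ∀ x ∈ H.even, φ x = x)
include hφeven

theorem trace_map (hφodd : ∀ x ∈ H.odd, φ x ∈ H.odd) (x : S) :
    H.trace (φ x) = H.trace x := by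
  obtain ⟨a, ha, c, hc, rfl⟩ :=
    Submodule.mem_sup.mp (H.compl.sup_eq_top ▸ Submodule.mem_top : x ∈ H.even ⊔ H.odd)
  rw [map_add, map_add, map_add, hφeven a ha, H.trace_eq_zero_of_mem_odd hc,
    H.trace_eq_zero_of_mem_odd (hφodd c hc)]

theorem map_conj (hφodd : ∀ x ∈ H.odd, φ x ∈ H.odd) (x : S) :
    φ (H.conj x) = H.conj (φ x) := by
  rw [conj_apply, conj_apply, map_sub, map_smul, hφeven _ H.one_even, H.trace_map hφeven hφodd]

end Automorphism

variable [CharP F 2]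

theorem b_mul_add_b_mul {px py pz pt : ZMod 2} {x y z t : S}
    (hx : IsPar H.even H.odd x px) (hy : IsPar H.even H.odd y py)
    (hz : IsPar H.even H.odd z pz) (ht : IsPar H.even H.odd t pt) :
    H.b (mul x y) (mul z t) + H.b (mul z y) (mul x t) = H.b x z * H.b y t := by
  simpa [sgn2, CharTwo.neg_eq] using H.comp_iii px py pz pt x y z t hx hy hz ht

theorem trace_one : H.trace H.one = 0 := by
  rw [trace_apply, H.b_polar ⟨H.one, H.one_even⟩ ⟨H.one, H.one_even⟩, polar_self, two_nsmul,
    CharTwo.add_self_eq_zero]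

theorem eq_zero_of_b_eq_zero (hodd : H.odd ≠ ⊥) {v : S} (hv : v ∈ H.even)
    (h : ∀ w ∈ H.even, H.b v w = 0) : v = 0 := by
  -- `v` annihilates the odd part, so `q(v) b(y, z) = b(vy, vz)` forces `q(v) = 0`
  have hvy : ∀ y ∈ H.odd, mul v y = 0 := by
    intro y hy
    refine H.b_odd_nondeg _ (H.mul_eo v hv y hy) fun z hz => ?_
    have h4 := H.b_mul_add_b_mul (.inl ⟨rfl, hv⟩) (.inr ⟨rfl, hy⟩) (.inr ⟨rfl, hz⟩)
      (.inl ⟨rfl, H.one_even⟩)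
    rw [H.mul_one, H.mul_one, (H.b_eo v hv z hz).1, zero_mul,
      H.b_comm_of_mem_even (H.mul_oo z hz y hy) hv, h _ (H.mul_oo z hz y hy), add_zero] at h4
    exact h4
  obtain ⟨y, hy, z, hz, hyz⟩ := H.exists_b_ne_zero hodd
  have hq : H.q0 ⟨v, hv⟩ = 0 := by
    have := H.comp_ii₁ ⟨v, hv⟩ y z
    rw [hvy y hy, hvy z hz, map_zero] at this
    exact (mul_eq_zero.mp this.symm).resolve_right hyz
  exact H.q0_reg ⟨v, hv⟩ (fun w => by rw [← H.b_polar]; exact h w w.2) hq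

theorem mul_self_of_mem_even (hodd : H.odd ≠ ⊥) {v : S} (hv : v ∈ H.even) :
    mul v v = H.trace v • v - H.q0 ⟨v, hv⟩ • H.one := by
  rw [← sub_eq_zero]
  refine H.eq_zero_of_b_eq_zero hodd ?_ fun w hw => ?_
  · exact H.even.sub_mem (H.mul_ee v hv v hv)
      (H.even.sub_mem (H.even.smul_mem _ hv) (H.even.smul_mem _ H.one_even))
  · have h4 := H.b_mul_add_b_mul (.inl ⟨rfl, hv⟩) (.inl ⟨rfl, hv⟩) (.inl ⟨rfl, H.one_even⟩)
      (.inl ⟨rfl, hw⟩)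
    have hcomp := H.comp_ii₁ ⟨v, hv⟩ H.one w
    rw [H.one_mul, H.one_mul] at h4
    rw [H.mul_one] at hcomp
    simp only [map_sub, map_smul, LinearMap.sub_apply, LinearMap.smul_apply, smul_eq_mul,
      trace_apply]
    linear_combination h4 - hcomp

theorem trace_conj (x : S) : H.trace (H.conj x) = -H.trace x := by
  rw [conj_apply, map_sub, map_smul, trace_one, smul_zero, zero_sub]

theorem conj_conj (x : S) : H.conj (H.conj x) = x := by
  rw [H.conj_apply (H.conj x), trace_conj, conj_apply, CharTwo.neg_eq]
  module

theorem conj_one : H.conj H.one = H.one := by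
  rw [conj_apply, trace_one, zero_smul, zero_sub, CharTwo.neg_eq_of_module (F := F)]

variable {φ : S →ₗ[F] S}

theorem okuboMul_one_right (hφeven : ∀ x ∈ H.even, φ x = x) (x : S) :
    H.okuboMul φ x H.one = φ (H.conj x) := by
  rw [okuboMul_apply, conj_one, hφeven _ H.one_even, hφeven _ H.one_even, H.mul_one]

theorem okuboMul_self_of_mem_even (hodd : H.odd ≠ ⊥) (hφeven : ∀ x ∈ H.even, φ x = x)
    {a : S} (ha : a ∈ H.even) : ∃ c : F, H.okuboMul φ a a = H.trace a • a + c • H.one := by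
  have hconj := H.conj_mem_even ha
  refine ⟨-H.trace a * H.trace a - H.q0 ⟨H.conj a, hconj⟩, ?_⟩
  rw [okuboMul_apply, hφeven _ hconj, hφeven _ hconj, H.mul_self_of_mem_even hodd hconj,
    trace_conj]
  generalize H.q0 ⟨_, hconj⟩ = q
  rw [conj_apply]
  module

theorem mul_eq_okuboMul (hφ3 : ∀ x, φ (φ (φ x)) = x) (hφeven : ∀ x ∈ H.even, φ x = x)
    (hφodd : ∀ x ∈ H.odd, φ x ∈ H.odd) (x y : S) :
    mul x y = H.okuboMul φ (φ (φ (H.conj x))) (φ (H.conj y)) := by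
  simp only [okuboMul_apply, ← H.map_conj hφeven hφodd, conj_conj, hφ3]

theorem isGrading_mul_of_isGrading_okuboMul {G : Type*} [Group G] {γ : G → Submodule F S}
    (hφ3 : ∀ x, φ (φ (φ x)) = x) (hφeven : ∀ x ∈ H.even, φ x = x)
    (hφodd : ∀ x ∈ H.odd, φ x ∈ H.odd) (hstar : IsGrading (H.okuboMul φ) γ)
    (hone : H.one ∈ γ 1) : IsGrading mul γ ∧ ∀ g, ∀ x ∈ γ g, φ x ∈ γ g := by
  have hψ : ∀ g, ∀ x ∈ γ g, φ (H.conj x) ∈ γ g := fun g x hx => by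
    simpa only [H.okuboMul_one_right hφeven, _root_.mul_one] using
      hstar g 1 x hx H.one hone
  have hφφ : ∀ g, ∀ x ∈ γ g, φ (φ x) ∈ γ g := fun g x hx => by
    simpa only [← H.map_conj hφeven hφodd, conj_conj] using hψ g _ (hψ g x hx)
  have hφγ : ∀ g, ∀ x ∈ γ g, φ x ∈ γ g := fun g x hx => by
    simpa only [hφ3] using hφφ g _ (hφφ g x hx)
  have hconj : ∀ g, ∀ x ∈ γ g, H.conj x ∈ γ g := fun g x hx => by
    simpa only [hφ3] using hφφ g _ (hψ g x hx)
  refine ⟨fun g h x hx y hy => ?_, hφγ⟩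
  rw [H.mul_eq_okuboMul hφ3 hφeven hφodd]
  exact hstar g h _ (hφφ g _ (hconj g x hx)) _ (hψ h y hy)

open DirectSum

variable {G : Type*} [Group G] [DecidableEq G] {γ : G → Submodule F S} [Decomposition γ]

section OkuboGrading

variable (hφeven : ∀ x ∈ H.even, φ x = x) (hstar : IsGrading (H.okuboMul φ) γ)
include hφeven hstar

theorem okuboMul_decompose_one {h : G} {x : S} (hx : x ∈ γ h) (hxe : x ∈ H.even) (g : G) :
    H.okuboMul φ x (decompose γ H.one g) =
      H.trace x • (decompose γ H.one (h * g) : S) - decompose γ x (h * g) := by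
  rw [← hstar.decompose_apply_left hx, H.okuboMul_one_right hφeven,
    hφeven _ (H.conj_mem_even hxe), conj_apply, decompose_sub, decompose_smul]
  rfl

theorem eq_trace_smul_decompose_one (hu : (decompose γ H.one 1 : S) = 0) {h : G} {x : S}
    (hx : x ∈ γ h) (hxe : x ∈ H.even) : x = H.trace x • (decompose γ H.one h : S) := by
  have h := H.okuboMul_decompose_one hφeven hstar hx hxe 1
  rw [hu, map_zero, _root_.mul_one, decompose_of_mem_same _ hx] at h
  exact (sub_eq_zero.mp h.symm).symm

variable (heven : SetLike.IsHomogeneous γ H.even) (hodd : H.odd ≠ ⊥)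
include heven hodd

theorem exists_decompose_one_one_eq_smul :
    ∃ c : F, (decompose γ H.one 1 : S) = c • H.one := by
  have hu := (decompose γ H.one 1).2
  have hue : (decompose γ H.one 1 : S) ∈ H.even := heven 1 H.one_even
  obtain ⟨c, hc⟩ := H.okuboMul_self_of_mem_even hodd hφeven hue
  have h := H.okuboMul_decompose_one hφeven hstar hu hue 1
  rw [_root_.mul_one, decompose_of_mem_same _ hu, hc] at h
  exact ⟨-c, by linear_combination (norm := module) h⟩

theorem decompose_one_eq_zero_of_ne (hu : (decompose γ H.one 1 : S) = 0) {h m : G}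
    (hh : (decompose γ H.one h : S) ≠ 0) (hmh : m ≠ h) (hmhh : m ≠ h * h) :
    (decompose γ H.one m : S) = 0 := by
  have hug := (decompose γ H.one h).2
  have hue : (decompose γ H.one h : S) ∈ H.even := heven h H.one_even
  have ht : H.trace (decompose γ H.one h : S) ≠ 0 := fun ht => hh <| by
    have := H.eq_trace_smul_decompose_one hφeven hstar hu hug hue
    rwa [ht, zero_smul] at this
  have hh1 : h ≠ h * h := fun h1 => hh (left_eq_mul.mp h1 ▸ hu)
  obtain ⟨c, hc⟩ := H.okuboMul_self_of_mem_even hodd hφeven hue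
  -- `u_h * u_h` is `t(u_h) u_h + c 1` and, by the grading, `t(u_h) u_{h²}`: compare components
  have hsq := H.okuboMul_decompose_one hφeven hstar hug hue h
  rw [hc, decompose_of_mem_ne _ hug hh1, sub_zero] at hsq
  have hcomp : ∀ k ≠ h * h, H.trace (decompose γ H.one h : S) •
      (decompose γ (decompose γ H.one h : S) k : S) + c • (decompose γ H.one k : S) = 0 := by
    intro k hk
    have := congrArg (fun z => (decompose γ z k : S)) hsq
    simpa only [decompose_add, decompose_smul, DirectSum.add_apply, DirectSum.smul_apply,
      Submodule.coe_add, Submodule.coe_smul,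
      decompose_of_mem_ne _ (decompose γ H.one (h * h)).2 hk.symm, smul_zero] using this
  have hc0 : c ≠ 0 := by
    rintro rfl
    have := hcomp h hh1
    rw [decompose_of_mem_same _ hug, zero_smul, add_zero] at this
    exact hh ((smul_eq_zero.mp this).resolve_left ht)
  have := hcomp m hmhh
  rw [decompose_of_mem_ne _ hug hmh.symm, smul_zero, zero_add] at this
  exact (smul_eq_zero.mp this).resolve_left hc0

theorem finrank_even_le_two (hu : (decompose γ H.one 1 : S) = 0) :
    Module.finrank F H.even ≤ 2 := by
  classical
  have hle : ∀ P : Submodule F S, (∀ m, (decompose γ H.one m : S) ∈ P) → H.even ≤ P := by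
    intro P hP x hx
    rw [← sum_support_decompose γ x]
    refine P.sum_mem fun m _ => ?_
    rw [H.eq_trace_smul_decompose_one hφeven hstar hu (decompose γ x m).2 (heven m hx)]
    exact P.smul_mem _ (hP m)
  by_cases hzero : ∀ h, (decompose γ H.one h : S) = 0
  · rw [le_bot_iff.mp (hle ⊥ fun m => by simp [hzero m]), finrank_bot]
    omega
  obtain ⟨h, hh⟩ := not_forall.mp hzero
  set a := (decompose γ H.one h : S)
  set b := (decompose γ H.one (h * h) : S)
  have hspan := hle (Submodule.span F {a, b}) fun m => by
    by_cases hmh : m = h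
    · exact Submodule.subset_span (hmh ▸ Set.mem_insert _ _)
    by_cases hmhh : m = h * h
    · exact Submodule.subset_span (hmhh ▸ Set.mem_insert_of_mem _ rfl)
    rw [H.decompose_one_eq_zero_of_ne hφeven hstar heven hodd hu hh hmh hmhh]
    exact zero_mem _
  have := FiniteDimensional.span_of_finite F (Set.toFinite {a, b})
  have hcard := finrank_span_finset_le_card (R := F) ({a, b} : Finset S)
  rw [Set.finrank, Finset.coe_pair] at hcard
  exact (Submodule.finrank_mono hspan).trans (hcard.trans Finset.card_le_two)

theorem one_mem_one_of_isGrading_okuboMul (h4 : Module.finrank F H.even = 4) :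
    H.one ∈ γ 1 := by
  obtain ⟨c, hc⟩ := H.exists_decompose_one_one_eq_smul hφeven hstar heven hodd
  by_cases hc0 : c = 0
  · rw [hc0, zero_smul] at hc
    have := H.finrank_even_le_two hφeven hstar heven hodd hc
    omega
  · rw [← inv_smul_smul₀ hc0 H.one, ← hc]
    exact (γ 1).smul_mem _ (decompose γ H.one 1).2

end OkuboGrading

section MulGrading

variable (hodd : H.odd ≠ ⊥) (hsuper : ∀ g, γ g ≤ γ g ⊓ H.even ⊔ γ g ⊓ H.odd)
  (hmul : IsGrading mul γ)
include hodd hsuper hmul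

theorem trace_eq_zero_of_mem_of_ne_one {k : G} (hk : k ≠ 1) {x : S} (hx : x ∈ γ k) :
    H.trace x = 0 := by
  obtain ⟨a, ⟨hak, hae⟩, c, ⟨-, hco⟩, rfl⟩ := Submodule.mem_sup.mp (hsuper k hx)
  rw [map_add, H.trace_eq_zero_of_mem_odd hco, add_zero]
  -- the component of `a² = t(a) a - q(a) 1` in degree `k ≠ k²` is `t(a) a`
  have h := decompose_of_mem_ne γ (hmul k k a hak a hak) (j := k)
    (fun h => hk (right_eq_mul.mp h.symm))
  simp only [H.mul_self_of_mem_even hodd hae, decompose_sub, decompose_smul,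
    DirectSum.sub_apply, DirectSum.smul_apply, Submodule.coe_sub, Submodule.coe_smul,
    decompose_of_mem_same γ hak,
    decompose_of_mem_ne γ (hmul.mem_one_of_mul_eq H.one_mul H.mul_one) hk.symm, smul_zero,
    sub_zero] at h
  rcases smul_eq_zero.mp h with h | rfl
  exacts [h, map_zero _]

theorem conj_mem {g : G} {x : S} (hx : x ∈ γ g) : H.conj x ∈ γ g := by
  rw [conj_apply]
  by_cases hg : g = 1
  · subst hg
    exact sub_mem (Submodule.smul_mem _ _ (hmul.mem_one_of_mul_eq H.one_mul H.mul_one)) hx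
  · rw [H.trace_eq_zero_of_mem_of_ne_one hodd hsuper hmul hg hx, zero_smul, zero_sub]
    exact neg_mem hx

theorem isGrading_okuboMul_of_isGrading_mul (hφγ : ∀ g, ∀ x ∈ γ g, φ x ∈ γ g) :
    IsGrading (H.okuboMul φ) γ := fun g h _ hx _ hy =>
  hmul g h _ (hφγ g _ (H.conj_mem hodd hsuper hmul hx)) _
    (hφγ h _ (hφγ h _ (H.conj_mem hodd hsuper hmul hy)))

end MulGrading

end HurwitzSuperOn

theorem okubo_gradings_characterization_general {F S G : Type*} [Field F] [AddCommGroup S]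
    [Module F S] [Group G] [DecidableEq G]
    (hchar : ringChar F = 2)
    (mul : S →ₗ[F] S →ₗ[F] S) (H : HurwitzSuperOn F S mul)
    (h8 : Module.finrank F S = 8) (h4 : Module.finrank F H.even = 4)
    (φ : S →ₗ[F] S)
    (hφ3 : φ ∘ₗ (φ ∘ₗ φ) = LinearMap.id)
    (hφeven : ∀ x ∈ H.even, φ x = x)
    (hφodd : ∀ x ∈ H.odd, φ x ∈ H.odd)
    (γ : G → Submodule F S) (hint : DirectSum.IsInternal γ)
    (hsuper : ∀ g : G, γ g = (γ g ⊓ H.even) ⊔ (γ g ⊓ H.odd)) :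
    (∀ g h : G, ∀ x ∈ γ g, ∀ y ∈ γ h,
      mul (φ (H.b x H.one • H.one - x)) (φ (φ (H.b y H.one • H.one - y))) ∈ γ (g * h)) ↔
    ((∀ g h : G, ∀ x ∈ γ g, ∀ y ∈ γ h, mul x y ∈ γ (g * h)) ∧
      ∀ g : G, ∀ x ∈ γ g, φ x ∈ γ g) := by
  have := ringChar.of_eq hchar
  let := hint.chooseDecomposition
  have hodd := H.odd_ne_bot h8 h4
  have hsuper' : ∀ g, γ g ≤ γ g ⊓ H.even ⊔ γ g ⊓ H.odd := fun g => (hsuper g).le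
  refine ⟨fun hstar => ?_, fun ⟨hmul, hφγ⟩ =>
    H.isGrading_okuboMul_of_isGrading_mul hodd hsuper' hmul hφγ⟩
  have heven := SetLike.isHomogeneous_of_le_sup_inf H.compl hsuper'
  exact H.isGrading_mul_of_isGrading_okuboMul (fun x => LinearMap.congr_fun hφ3 x) hφeven hφodd
    hstar (H.one_mem_one_of_isGrading_okuboMul hφeven hstar heven hodd h4)

/-- for the Okubo superalgebra `S = C̄_φ` in characteristic 2 with product
`x*y = φ(x̄)·φ²(ȳ)` (where `C` is a Cayley superalgebra with even part the quaternion
subalgebra, `φ³ = 1`, `φ|_{C₀} = 1`, no nonzero `φ`-fixed odd vectors), a decomposition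
compatible with the main `ℤ₂`-grading is a group grading of `(S,*)` iff it is a group
grading of `(S,·)` whose homogeneous components are all `φ`-invariant. -/
theorem okubo_gradings_characterization {F S G : Type*} [Field F] [AddCommGroup S]
    [Module F S] [Group G] [DecidableEq G]
    (hchar : ringChar F = 2)
    (mul : S →ₗ[F] S →ₗ[F] S) (H : HurwitzSuperOn F S mul)
    (h8 : Module.finrank F S = 8) (h4 : Module.finrank F H.even = 4)
    (φ : S →ₗ[F] S)
    (hφmul : ∀ x y : S, φ (mul x y) = mul (φ x) (φ y))
    (hφ3 : φ ∘ₗ (φ ∘ₗ φ) = LinearMap.id)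
    (hφne : φ ≠ LinearMap.id)
    (hφeven : ∀ x ∈ H.even, φ x = x)
    (hφodd : ∀ x ∈ H.odd, φ x ∈ H.odd)
    (hφfix : ∀ x ∈ H.odd, φ x = x → x = 0)
    (γ : G → Submodule F S) (hint : DirectSum.IsInternal γ)
    (hsuper : ∀ g : G, γ g = (γ g ⊓ H.even) ⊔ (γ g ⊓ H.odd)) :
    (∀ g h : G, ∀ x ∈ γ g, ∀ y ∈ γ h,
      mul (φ (H.b x H.one • H.one - x)) (φ (φ (H.b y H.one • H.one - y))) ∈ γ (g * h)) ↔
    ((∀ g h : G, ∀ x ∈ γ g, ∀ y ∈ γ h, mul x y ∈ γ (g * h)) ∧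
      ∀ g : G, ∀ x ∈ γ g, φ x ∈ γ g) :=
  okubo_gradings_characterization_general hchar mul H h8 h4 φ hφ3 hφeven hφodd γ hint hsuper
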